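/- arXiv:2309.11030 — 4 statements merged into one kernel-verified Lean document; each statement's English description precedes it below -/
import Mathlib

section
/- The Poisson commutant of the maximal Abelian subalgebra a₍₃₄₎ = span{x₃,x₄} of 𝔠(2) is Abelian: if p, q ∈ ℝ[x₁,…,x₆] satisfy {p,x₃} = {p,x₄} = 0 and {q,x₃} = {q,x₄} = 0, then {p,q} = 0. -/
open MvPolynomial

/-- Structure-constant polynomials `c j k = {x_{j+1}, x_{k+1}}` of the 2D conformal
algebra `𝔠(2)` (indices `0,…,5` correspond to `x₁,…,x₆`). -/
noncomputable def c2Mat : Matrix (Fin 6) (Fin 6) (MvPolynomial (Fin 6) ℝ) :=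
  !![0,            0,            -X 1, X 0,  2 * X 3,      2 * X 2;
     0,            0,            X 0,  X 1,  -(2 * X 2),   2 * X 3;
     X 1,          -X 0,         0,    0,    X 5,          -X 4;
     -X 0,         -X 1,         0,    0,    X 4,          X 5;
     -(2 * X 3),   2 * X 2,      -X 5, -X 4, 0,            0;
     -(2 * X 2),   -(2 * X 3),   X 4,  -X 5, 0,            0]

/-- The Lie–Poisson bracket of `𝔠(2)` on `ℝ[x₁,…,x₆]`:
`{p,q} = ∑_{j,k} c_{jk} (∂p/∂x_j) (∂q/∂x_k)`. -/
noncomputable def pb (p q : MvPolynomial (Fin 6) ℝ) : MvPolynomial (Fin 6) ℝ :=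
  ∑ j : Fin 6, ∑ k : Fin 6, c2Mat j k * pderiv j p * pderiv k q

/-! Write `z = x₁ + i x₂`, `w = x₅ + i x₆`, `P = ∂₁p + i ∂₂p`, `Q = ∂₅p + i ∂₆p`, and `P'`, `Q'`
for `q`. The conditions `{p,x₃} = {p,x₄} = 0` say `z̄ P = w Q̄`. Since `x₃` and `x₄` commute,
the `∂₃`, `∂₄` components drop out of `{p,q}`, leaving
`2 x₄ Re (P̄ Q' - Q̄ P') + 2 x₃ Im (P̄ Q' + Q̄ P')`. After multiplication by `|z|² = x₁² + x₂²`
the relation makes `P̄ Q'` and `Q̄ P'` complex conjugates, so both parts vanish; `ℝ[x]` is a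
domain. -/

section Cramer

variable {R : Type*} [CommRing R] (z₀ z₁ w₀ w₁ : R)

lemma sq_add_sq_mul_eq_cramer {a₀ a₁ a₄ a₅ : R}
    (h₁ : -z₁ * a₀ + z₀ * a₁ - w₁ * a₄ + w₀ * a₅ = 0)
    (h₂ : z₀ * a₀ + z₁ * a₁ - w₀ * a₄ - w₁ * a₅ = 0) :
    (z₀ ^ 2 + z₁ ^ 2) * a₀ = z₀ * (w₀ * a₄ + w₁ * a₅) - z₁ * (w₁ * a₄ - w₀ * a₅) ∧
      (z₀ ^ 2 + z₁ ^ 2) * a₁ = z₁ * (w₀ * a₄ + w₁ * a₅) + z₀ * (w₁ * a₄ - w₀ * a₅) :=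
  ⟨by linear_combination z₀ * h₂ - z₁ * h₁, by linear_combination z₁ * h₂ + z₀ * h₁⟩

lemma sq_add_sq_mul_bilinear_eq_zero {a₀ a₁ a₄ a₅ b₀ b₁ b₄ b₅ : R}
    (ha₁ : -z₁ * a₀ + z₀ * a₁ - w₁ * a₄ + w₀ * a₅ = 0)
    (ha₂ : z₀ * a₀ + z₁ * a₁ - w₀ * a₄ - w₁ * a₅ = 0)
    (hb₁ : -z₁ * b₀ + z₀ * b₁ - w₁ * b₄ + w₀ * b₅ = 0)
    (hb₂ : z₀ * b₀ + z₁ * b₁ - w₀ * b₄ - w₁ * b₅ = 0) :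
    (z₀ ^ 2 + z₁ ^ 2) * (a₀ * b₄ + a₁ * b₅ - a₄ * b₀ - a₅ * b₁) = 0 ∧
      (z₀ ^ 2 + z₁ ^ 2) * (a₀ * b₅ - a₁ * b₄ + a₄ * b₁ - a₅ * b₀) = 0 := by
  obtain ⟨ha₀', ha₁'⟩ := sq_add_sq_mul_eq_cramer z₀ z₁ w₀ w₁ ha₁ ha₂
  obtain ⟨hb₀', hb₁'⟩ := sq_add_sq_mul_eq_cramer z₀ z₁ w₀ w₁ hb₁ hb₂
  constructor
  · linear_combination b₄ * ha₀' + b₅ * ha₁' - a₄ * hb₀' - a₅ * hb₁'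
  · linear_combination b₅ * ha₀' - b₄ * ha₁' + a₄ * hb₁' - a₅ * hb₀'

end Cramer

lemma pb_X_right (p : MvPolynomial (Fin 6) ℝ) (k : Fin 6) :
    pb p (X k) = ∑ j, c2Mat j k * pderiv j p := by
  simp [pb, pderiv_X, Pi.single_apply, mul_right_comm _ _ (ite _ _ _)]

lemma pb_X_two (p : MvPolynomial (Fin 6) ℝ) :
    pb p (X 2) = -X 1 * pderiv 0 p + X 0 * pderiv 1 p - X 5 * pderiv 4 p + X 4 * pderiv 5 p := by
  simp only [pb_X_right, Fin.sum_univ_six, c2Mat, Matrix.of_apply, Matrix.cons_val', Matrix.cons_val,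
    Matrix.cons_val_fin_one, Matrix.cons_val_zero, Matrix.cons_val_one]
  ring

lemma pb_X_three (p : MvPolynomial (Fin 6) ℝ) :
    pb p (X 3) = X 0 * pderiv 0 p + X 1 * pderiv 1 p - X 4 * pderiv 4 p - X 5 * pderiv 5 p := by
  simp only [pb_X_right, Fin.sum_univ_six, c2Mat, Matrix.of_apply, Matrix.cons_val', Matrix.cons_val,
    Matrix.cons_val_fin_one, Matrix.cons_val_zero, Matrix.cons_val_one]
  ring

lemma pb_eq_pderiv_mul_pb_X_add (p q : MvPolynomial (Fin 6) ℝ) :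
    pb p q = pderiv 2 q * pb p (X 2) + pderiv 3 q * pb p (X 3)
      - pderiv 2 p * pb q (X 2) - pderiv 3 p * pb q (X 3)
      + 2 * X 3 * (pderiv 0 p * pderiv 4 q + pderiv 1 p * pderiv 5 q
          - pderiv 4 p * pderiv 0 q - pderiv 5 p * pderiv 1 q)
      + 2 * X 2 * (pderiv 0 p * pderiv 5 q - pderiv 1 p * pderiv 4 q
          + pderiv 4 p * pderiv 1 q - pderiv 5 p * pderiv 0 q) := by
  rw [pb_X_two, pb_X_two, pb_X_three, pb_X_three]
  simp only [pb, Fin.sum_univ_six, c2Mat, Matrix.of_apply, Matrix.cons_val', Matrix.cons_val,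
    Matrix.cons_val_fin_one, Matrix.cons_val_zero, Matrix.cons_val_one]
  ring

lemma X_zero_sq_add_X_one_sq_ne_zero : (X 0 ^ 2 + X 1 ^ 2 : MvPolynomial (Fin 6) ℝ) ≠ 0 := by
  intro h
  simpa using congrArg (eval fun _ => (1 : ℝ)) h

/-- The Poisson commutant of `a₍₃₄₎ = span{x₃,x₄}` is Abelian. -/
theorem stmt5 (p q : MvPolynomial (Fin 6) ℝ)
    (hp1 : pb p (X 2) = 0) (hp2 : pb p (X 3) = 0)
    (hq1 : pb q (X 2) = 0) (hq2 : pb q (X 3) = 0) :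
    pb p q = 0 := by
  rw [pb_eq_pderiv_mul_pb_X_add, hp1, hp2, hq1, hq2]
  rw [pb_X_two] at hp1 hq1
  rw [pb_X_three] at hp2 hq2
  obtain ⟨h₄, h₃⟩ := sq_add_sq_mul_bilinear_eq_zero _ _ _ _ hp1 hp2 hq1 hq2
  rw [(mul_eq_zero.mp h₄).resolve_left X_zero_sq_add_X_one_sq_ne_zero,
    (mul_eq_zero.mp h₃).resolve_left X_zero_sq_add_X_one_sq_ne_zero]
  ring
end

section
/- The quadratic Poisson algebra Q₃(2) from the subalgebra a₃ = span{x₃}: set A₁ = x₃, A₂ = x₄, A₃ = x₁² + x₂², A₄ = x₁x₅ + x₂x₆, A₅ = x₁x₆ − x₂x₅, A₆ = x₅² + x₆². Then {Aⱼ, x₃} = 0 for all 1 ≤ j ≤ 6; {A₁, Aⱼ} = 0 for all j; and {A₂, A₃} = −2A₃, {A₂, A₄} = 0, {A₂, A₅} = 0, {A₂, A₆} = 2A₆, {A₃, A₄} = 4A₂A₃, {A₃, A₅} = 4A₁A₃, {A₃, A₆} = 8(A₂A₄ + A₁A₅), {A₄, A₅} = 0, {A₄, A₆} = 4A₂A₆,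 {A₅, A₆} = 4A₁A₆. -/
open MvPolynomial

/-- Generators of the quadratic Poisson algebra `Q₃(2)`:
`A₁ = x₃, A₂ = x₄, A₃ = x₁² + x₂², A₄ = x₁x₅ + x₂x₆,
A₅ = x₁x₆ − x₂x₅, A₆ = x₅² + x₆²`. -/
noncomputable def A3 : Fin 6 → MvPolynomial (Fin 6) ℝ :=
  ![X 2,
    X 3,
    X 0 ^ 2 + X 1 ^ 2,
    X 0 * X 4 + X 1 * X 5,
    X 0 * X 5 - X 1 * X 4,
    X 4 ^ 2 + X 5 ^ 2]

/-!
Both arguments of `pb` enter through partial derivatives, so `pb` is a biderivation and every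
bracket of polynomials in the coordinates reduces, by linearity and the Leibniz rule, to the
structure constants `pb (X j) (X k) = c2Mat j k`; each identity then becomes a polynomial
identity. The Hamiltonian flow of `x₃` rotates the planes `(x₁, x₂)` and `(x₅, x₆)` simultaneously,
and the `Aⱼ` are invariants of this rotation. Since `A₁ = x₃`, the brackets `{A₁, Aⱼ}` vanish by
antisymmetry.
-/

section pderivBracket

variable {σ R : Type*} [Fintype σ] [CommRing R] (C : Matrix σ σ (MvPolynomial σ R))

noncomputable def pderivBracket (p q : MvPolynomial σ R) : MvPolynomial σ R :=
  ∑ j, ∑ k, C j k * pderiv j p * pderiv k q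

lemma pderivBracket_add_left (p q r : MvPolynomial σ R) :
    pderivBracket C (p + q) r = pderivBracket C p r + pderivBracket C q r := by
  simp only [pderivBracket, map_add, mul_add, add_mul, Finset.sum_add_distrib]

lemma pderivBracket_add_right (p q r : MvPolynomial σ R) :
    pderivBracket C p (q + r) = pderivBracket C p q + pderivBracket C p r := by
  simp only [pderivBracket, map_add, mul_add, Finset.sum_add_distrib]

lemma pderivBracket_sub_left (p q r : MvPolynomial σ R) :
    pderivBracket C (p - q) r = pderivBracket C p r - pderivBracket C q r := by
  simp only [pderivBracket, map_sub, mul_sub, sub_mul, Finset.sum_sub_distrib]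

lemma pderivBracket_sub_right (p q r : MvPolynomial σ R) :
    pderivBracket C p (q - r) = pderivBracket C p q - pderivBracket C p r := by
  simp only [pderivBracket, map_sub, mul_sub, Finset.sum_sub_distrib]

lemma pderivBracket_mul_left (p q r : MvPolynomial σ R) :
    pderivBracket C (p * q) r = p * pderivBracket C q r + q * pderivBracket C p r := by
  simp only [pderivBracket, Derivation.leibniz, smul_eq_mul, Finset.mul_sum,
    ← Finset.sum_add_distrib]
  exact Finset.sum_congr rfl fun j _ => Finset.sum_congr rfl fun k _ => by ring

lemma pderivBracket_mul_right (p q r : MvPolynomial σ R) :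
    pderivBracket C p (q * r) = q * pderivBracket C p r + r * pderivBracket C p q := by
  simp only [pderivBracket, Derivation.leibniz, smul_eq_mul, Finset.mul_sum,
    ← Finset.sum_add_distrib]
  exact Finset.sum_congr rfl fun j _ => Finset.sum_congr rfl fun k _ => by ring

lemma pderivBracket_X_X [DecidableEq σ] (i l : σ) : pderivBracket C (X i) (X l) = C i l := by
  simp [pderivBracket, pderiv_X, Pi.single_apply]

lemma pderivBracket_swap (hC : ∀ j k, C k j = -C j k) (p q : MvPolynomial σ R) :
    pderivBracket C q p = -pderivBracket C p q := by
  rw [pderivBracket, Finset.sum_comm, pderivBracket, ← Finset.sum_neg_distrib]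
  refine Finset.sum_congr rfl fun j _ => ?_
  rw [← Finset.sum_neg_distrib]
  refine Finset.sum_congr rfl fun k _ => ?_
  rw [hC]
  ring

end pderivBracket

lemma pb_eq_pderivBracket : pb = pderivBracket c2Mat := rfl

lemma c2Mat_swap (j k : Fin 6) : c2Mat k j = -c2Mat j k := by
  fin_cases j <;> fin_cases k <;> simp [c2Mat]

lemma pb_swap (p q : MvPolynomial (Fin 6) ℝ) : pb q p = -pb p q :=
  pderivBracket_swap c2Mat c2Mat_swap p q

lemma pb_A3_X_two (j : Fin 6) : pb (A3 j) (X 2) = 0 := by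
  fin_cases j <;>
    simp only [Fin.zero_eta, Fin.mk_one, Fin.reduceFinMk, pb_eq_pderivBracket, A3,
      Matrix.cons_val, pow_two, pderivBracket_add_left, pderivBracket_sub_left,
      pderivBracket_mul_left, pderivBracket_X_X, c2Mat, Matrix.of_apply, Matrix.cons_val',
      Matrix.cons_val_fin_one, Matrix.cons_val_one, Matrix.cons_val_zero] <;>
    ring

/-- The quadratic Poisson algebra `Q₃(2)` from the subalgebra `a₃ = span{x₃}`. -/
theorem stmt11 :
    (∀ j : Fin 6, pb (A3 j) (X 2) = 0) ∧
    (∀ j : Fin 6, pb (A3 0) (A3 j) = 0) ∧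
    pb (A3 1) (A3 2) = -2 * A3 2 ∧
    pb (A3 1) (A3 3) = 0 ∧
    pb (A3 1) (A3 4) = 0 ∧
    pb (A3 1) (A3 5) = 2 * A3 5 ∧
    pb (A3 2) (A3 3) = 4 * A3 1 * A3 2 ∧
    pb (A3 2) (A3 4) = 4 * A3 0 * A3 2 ∧
    pb (A3 2) (A3 5) = 8 * (A3 1 * A3 3 + A3 0 * A3 4) ∧
    pb (A3 3) (A3 4) = 0 ∧
    pb (A3 3) (A3 5) = 4 * A3 1 * A3 5 ∧
    pb (A3 4) (A3 5) = 4 * A3 0 * A3 5 := by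
  refine ⟨pb_A3_X_two, fun j => ?_, ?_, ?_, ?_, ?_, ?_, ?_, ?_, ?_, ?_, ?_⟩
  · change pb (X 2) (A3 j) = 0
    rw [pb_swap, pb_A3_X_two, neg_zero]
  all_goals
    simp only [pb_eq_pderivBracket, A3, Matrix.cons_val, pow_two, pderivBracket_add_left,
      pderivBracket_sub_left, pderivBracket_mul_left, pderivBracket_add_right,
      pderivBracket_sub_right, pderivBracket_mul_right, pderivBracket_X_X, c2Mat,
      Matrix.of_apply, Matrix.cons_val', Matrix.cons_val_fin_one, Matrix.cons_val_one,
      Matrix.cons_val_zero]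
    ring
end

section
/- Casimir functions of the quadratic Poisson algebra Q₄(2): with A₁ = x₃, A₂ = x₄, A₃ = x₁x₅, A₄ = x₁x₆, A₅ = x₂x₆, A₆ = x₂x₅, each of the polynomials K₁ = A₂, K₂ = A₁² + A₃ + A₅, K₃ = A₄ − A₆ − 2A₁A₂ satisfies {Kᵢ, Aⱼ} = 0 for every 1 ≤ j ≤ 6. -/
open MvPolynomial

/-- Generators of the quadratic Poisson algebra `Q₄(2)`. -/
noncomputable def A4 : Fin 6 → MvPolynomial (Fin 6) ℝ :=
  ![X 2,
    X 3,
    X 0 * X 4,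
    X 0 * X 5,
    X 1 * X 5,
    X 1 * X 4]

/-!
A bracket of the form `∑ c_jk ∂_j p ∂_k q` is a biderivation whose values on coordinate
functions are the `c_jk`. Expanding `{K_i, A_j}` by the Leibniz rule therefore turns it into an
explicit polynomial in the `x`'s built from the structure constants, which cancels identically.
-/

namespace MvPolynomial

section CommSemiring

variable {R σ : Type*} [CommSemiring R] [Fintype σ]

noncomputable def matrixBracket (c : Matrix σ σ (MvPolynomial σ R)) (p q : MvPolynomial σ R) :
    MvPolynomial σ R :=
  ∑ j, ∑ k, c j k * pderiv j p * pderiv k q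

variable (c : Matrix σ σ (MvPolynomial σ R)) (p q r : MvPolynomial σ R)

@[simp]
theorem matrixBracket_X_X [DecidableEq σ] (a b : σ) : matrixBracket c (X a) (X b) = c a b := by
  simp [matrixBracket, pderiv_X, Pi.single_apply]

@[simp]
theorem matrixBracket_add_left :
    matrixBracket c (p + q) r = matrixBracket c p r + matrixBracket c q r := by
  simp only [matrixBracket, map_add, mul_add, add_mul, Finset.sum_add_distrib]

@[simp]
theorem matrixBracket_mul_left :
    matrixBracket c (p * q) r = matrixBracket c p r * q + p * matrixBracket c q r := by
  simp only [matrixBracket, pderiv_mul, Finset.sum_mul, Finset.mul_sum, ← Finset.sum_add_distrib]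
  exact Finset.sum_congr rfl fun _ _ => Finset.sum_congr rfl fun _ _ => by ring

@[simp]
theorem matrixBracket_mul_right :
    matrixBracket c p (q * r) = matrixBracket c p q * r + q * matrixBracket c p r := by
  simp only [matrixBracket, pderiv_mul, Finset.sum_mul, Finset.mul_sum, ← Finset.sum_add_distrib]
  exact Finset.sum_congr rfl fun _ _ => Finset.sum_congr rfl fun _ _ => by ring

@[simp]
theorem matrixBracket_ofNat_left (n : ℕ) [n.AtLeastTwo] :
    matrixBracket c (no_index (OfNat.ofNat n)) q = 0 := by
  simp only [matrixBracket, ← map_ofNat C n, pderiv_C, mul_zero, zero_mul, Finset.sum_const_zero]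

end CommSemiring

@[simp]
theorem matrixBracket_sub_left {R σ : Type*} [CommRing R] [Fintype σ]
    (c : Matrix σ σ (MvPolynomial σ R)) (p q r : MvPolynomial σ R) :
    matrixBracket c (p - q) r = matrixBracket c p r - matrixBracket c q r := by
  simp only [matrixBracket, map_sub, mul_sub, sub_mul, Finset.sum_sub_distrib]

end MvPolynomial

theorem pb_eq_matrixBracket : pb = matrixBracket c2Mat := rfl

/-- Casimir functions of the quadratic Poisson algebra `Q₄(2)`. -/
theorem stmt14 :
    (∀ j : Fin 6, pb (A4 1) (A4 j) = 0) ∧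
    (∀ j : Fin 6, pb (A4 0 ^ 2 + A4 2 + A4 4) (A4 j) = 0) ∧
    (∀ j : Fin 6, pb (A4 3 - A4 5 - 2 * A4 0 * A4 1) (A4 j) = 0) := by
  refine ⟨?_, ?_, ?_⟩ <;> intro j <;> fin_cases j <;>
    simp [pb_eq_matrixBracket, A4, c2Mat, pow_two] <;> ring
end

section
/- The quadratic Poisson algebra Q₅(2) from the subalgebra a₅ = span{x₅}: set A₁ = x₅, A₂ = x₆, A₃ = x₄² − x₁x₅, A₄ = x₁x₆ − x₂x₅ − 2x₃x₄, A₅ = x₃² + x₂x₆, A₆ = x₃x₅ − x₄x₆. Then {Aⱼ, x₅} = 0 for all 1 ≤ j ≤ 6; A₁ and A₄ are central among the generators, i.e. {A₁, Aⱼ} = 0 and {A₄, Aⱼ} = 0 for all j; {A₂, A₃} = {A₂, A₅} = 2A₆, {A₂, A₆} = A₁² + A₂², {A₃, A₅} = 0; and the ℝ-subalgebra of ℝ[x₁,…,x₆] generated by A₁,…,A₆ is closed under the Poisson bracket, i.e. {Aᵢ, Aⱼ} lies in this subalgebra for all i, j. -/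
open MvPolynomial

/-- Generators of the quadratic Poisson algebra `Q₅(2)`:
`A₁ = x₅, A₂ = x₆, A₃ = x₄² − x₁x₅, A₄ = x₁x₆ − x₂x₅ − 2x₃x₄,
A₅ = x₃² + x₂x₆, A₆ = x₃x₅ − x₄x₆`. -/
noncomputable def A5g : Fin 6 → MvPolynomial (Fin 6) ℝ :=
  ![X 4,
    X 5,
    X 3 ^ 2 - X 0 * X 4,
    X 0 * X 5 - X 1 * X 4 - 2 * X 2 * X 3,
    X 2 ^ 2 + X 1 * X 5,
    X 2 * X 4 - X 3 * X 5]

theorem Derivation.map_ofNat {R A M : Type*} [CommSemiring R] [CommSemiring A] [AddCommMonoid M]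
    [Algebra R A] [Module A M] [Module R M] (D : Derivation R A M) (n : ℕ) [n.AtLeastTwo] :
    D (no_index (OfNat.ofNat n : A)) = 0 := by
  rw [← Nat.cast_ofNat]
  exact D.map_natCast n

/-- Entry `(i, j)` is `{Aᵢ₊₁, Aⱼ₊₁}` written as a polynomial in the generators, the variable
`X k` standing for `Aₖ₊₁`. -/
noncomputable def q5Bracket : Matrix (Fin 6) (Fin 6) (MvPolynomial (Fin 6) ℝ) :=
  !![0, 0,                    0,                         0, 0,                         0;
     0, 0,                    2 * X 5,                   0, 2 * X 5,                   X 0 ^ 2 + X 1 ^ 2;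
     0, -(2 * X 5),           0,                         0, 0,                         -(X 0 * X 3) - 2 * X 1 * X 2;
     0, 0,                    0,                         0, 0,                         0;
     0, -(2 * X 5),           0,                         0, 0,                         -(X 0 * X 3) - 2 * X 1 * X 2;
     0, -(X 0 ^ 2 + X 1 ^ 2), X 0 * X 3 + 2 * X 1 * X 2, 0, X 0 * X 3 + 2 * X 1 * X 2, 0]

theorem pb_A5g_eq_aeval (i j : Fin 6) : pb (A5g i) (A5g j) = aeval A5g (q5Bracket i j) := by
  fin_cases i <;> fin_cases j <;>
    simp [pb, c2Mat, q5Bracket, A5g, Fin.sum_univ_six, pderiv_X, Pi.single_apply,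
      Derivation.map_ofNat, map_ofNat] <;>
    ring

/-- The quadratic Poisson algebra `Q₅(2)` from the subalgebra `a₅ = span{x₅}`. -/
theorem stmt15 :
    (∀ j : Fin 6, pb (A5g j) (X 4) = 0) ∧
    (∀ j : Fin 6, pb (A5g 0) (A5g j) = 0) ∧
    (∀ j : Fin 6, pb (A5g 3) (A5g j) = 0) ∧
    pb (A5g 1) (A5g 2) = 2 * A5g 5 ∧
    pb (A5g 1) (A5g 4) = 2 * A5g 5 ∧
    pb (A5g 1) (A5g 5) = A5g 0 ^ 2 + A5g 1 ^ 2 ∧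
    pb (A5g 2) (A5g 4) = 0 ∧
    (∀ i j : Fin 6, pb (A5g i) (A5g j) ∈ Algebra.adjoin ℝ (Set.range A5g)) := by
  have hX4 : (X 4 : MvPolynomial (Fin 6) ℝ) = A5g 0 := rfl
  simp only [hX4, pb_A5g_eq_aeval]
  refine ⟨?_, ?_, ?_, ?_, ?_, ?_, ?_, fun i j => ?_⟩
  iterate 3 (intro j; fin_cases j <;> simp [q5Bracket])
  iterate 4 simp [q5Bracket, map_ofNat]
  rw [← aeval_range]
  exact AlgHom.mem_range_self _ _
end
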